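/- Let k ≥ 1 and let φ, φ' be Boolean functions on V = {0,...,k}, both in canonical form, with #φ = #φ'. Then φ ≃ φ'. -/

import Mathlib

/-!
A function in canonical form is true on the even valuations below some even size `c`, false above
`c` and on odd valuations, and arbitrary at size `c`. Two of them with the same count therefore
disagree only at one even size `c`, so they differ by a permutation of the valuations of size `c`.
Two such valuations with a common neighbour `σ` of size `c - 1` exchange their values by adjoining
and then removing a pair through `σ`, and these adjacent transpositions generate all of them since
any two `c`-sets are joined by a chain of single-element exchanges.
-/

open scoped Classical

/-- Flip the membership of variable `l` in valuation `ν`. -/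
def flipV {k : ℕ} (ν : Finset (Fin (k + 1))) (l : Fin (k + 1)) : Finset (Fin (k + 1)) :=
  if l ∈ ν then ν.erase l else insert l ν

/-- The set of satisfying valuations of a Boolean function on `V = {0,...,k}`. -/
def satSet {k : ℕ} (φ : Finset (Fin (k + 1)) → Bool) : Finset (Finset (Fin (k + 1))) :=
  Finset.univ.filter (fun ν => φ ν = true)

/-- `φ →+ φ'`: there are `ν, l` with `ν ∉ sat(φ)`, `ν^(l) ∉ sat(φ)` and
`sat(φ') = sat(φ) ∪ {ν, ν^(l)}`. -/
def StepPlus (k : ℕ) (φ φ' : Finset (Fin (k + 1)) → Bool) : Prop :=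
  ∃ (ν : Finset (Fin (k + 1))) (l : Fin (k + 1)),
    φ ν = false ∧ φ (flipV ν l) = false ∧
    ∀ μ, (φ' μ = true ↔ φ μ = true ∨ μ = ν ∨ μ = flipV ν l)

/-- `φ →− φ'`: remove two adjacent satisfying valuations. -/
def StepMinus (k : ℕ) (φ φ' : Finset (Fin (k + 1)) → Bool) : Prop :=
  StepPlus k φ' φ

/-- `φ →± φ'`. -/
def StepPM (k : ℕ) (φ φ' : Finset (Fin (k + 1)) → Bool) : Prop :=
  StepPlus k φ φ' ∨ StepMinus k φ φ'

/-- The relation `≃` (equivalently `→±*`): the reflexive transitive closure of `→±`. -/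
def EquivPM (k : ℕ) (φ φ' : Finset (Fin (k + 1)) → Bool) : Prop :=
  Relation.ReflTransGen (StepPM k) φ φ'

/-- A Boolean function is in canonical form if every satisfying valuation has even size and
there is no bad pair: no even-size valuations `ν, ν'` with `|ν'| < |ν|`, `ν ∈ sat(φ)` and
`ν' ∉ sat(φ)`. -/
def CanonicalForm (k : ℕ) (φ : Finset (Fin (k + 1)) → Bool) : Prop :=
  (∀ ν, φ ν = true → Even ν.card) ∧
  ¬ ∃ ν ν' : Finset (Fin (k + 1)), Even ν.card ∧ Even ν'.card ∧
      ν'.card < ν.card ∧ φ ν = true ∧ φ ν' = false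

open Finset

section

variable {k : ℕ}

lemma flipV_ne (ν : Finset (Fin (k + 1))) (l : Fin (k + 1)) : flipV ν l ≠ ν := by
  unfold flipV
  split_ifs with hl
  · exact fun h => Finset.notMem_erase l ν (h.symm ▸ hl)
  · exact fun h => hl (h ▸ mem_insert_self l ν)

lemma stepPlus_adjoin {φ : Finset (Fin (k + 1)) → Bool} {ν : Finset (Fin (k + 1))}
    {l : Fin (k + 1)} (hν : φ ν = false) (hl : φ (flipV ν l) = false) :
    StepPlus k φ (fun x => φ x || decide (x = ν) || decide (x = flipV ν l)) :=
  ⟨ν, l, hν, hl, fun μ => by simp [or_assoc]⟩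

lemma comp_swap_apply_eq_false {c : ℕ} {φ : Finset (Fin (k + 1)) → Bool}
    (hφ : ∀ x : Finset (Fin (k + 1)), x.card + 1 = c → φ x = false)
    {ν μ : Finset (Fin (k + 1))} (hν : ν.card = c) (hμ : μ.card = c) :
    ∀ x : Finset (Fin (k + 1)), x.card + 1 = c → (φ ∘ Equiv.swap ν μ) x = false := by
  intro x hx
  have hxν : x ≠ ν := ne_of_apply_ne card (by omega)
  have hxμ : x ≠ μ := ne_of_apply_ne card (by omega)
  simpa [Equiv.swap_apply_of_ne_of_ne hxν hxμ] using hφ x hx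

lemma comp_swap_of_apply_eq {α β : Type*} [DecidableEq α] (φ : α → β) {ν μ : α}
    (h : φ ν = φ μ) : φ ∘ Equiv.swap ν μ = φ := by
  funext x
  rcases eq_or_ne x ν with rfl | hν
  · simp [h]
  rcases eq_or_ne x μ with rfl | hμ
  · simp [h]
  simp [Equiv.swap_apply_of_ne_of_ne hν hμ]

/-- If `σ^(a)` is satisfying and `σ^(b)` is not: adjoin `{σ, σ^(b)}`, then remove `{σ, σ^(a)}`. -/
theorem equivPM_comp_swap_flipV {φ : Finset (Fin (k + 1)) → Bool} {σ : Finset (Fin (k + 1))}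
    (hσ : φ σ = false) (a b : Fin (k + 1)) :
    EquivPM k φ (φ ∘ Equiv.swap (flipV σ a) (flipV σ b)) := by
  by_cases heq : φ (flipV σ a) = φ (flipV σ b)
  · rw [comp_swap_of_apply_eq φ heq]
    exact .refl
  wlog ha : φ (flipV σ a) = true generalizing a b
  · rw [Equiv.swap_comm]
    exact this b a (Ne.symm heq) (by simpa [ha] using heq)
  have hb : φ (flipV σ b) = false := by simpa [ha] using heq
  have hσa : σ ≠ flipV σ a := (flipV_ne σ a).symm
  have hσb : σ ≠ flipV σ b := (flipV_ne σ b).symm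
  have hjoin : (fun x => (φ ∘ Equiv.swap (flipV σ a) (flipV σ b)) x || decide (x = σ) ||
      decide (x = flipV σ a)) = fun x => φ x || decide (x = σ) || decide (x = flipV σ b) := by
    funext x
    rcases eq_or_ne x (flipV σ a) with rfl | hxa
    · simp [ha, hb]
    rcases eq_or_ne x (flipV σ b) with rfl | hxb
    · simp [ha]
    simp [Equiv.swap_apply_of_ne_of_ne hxa hxb, hxa, hxb]
  have hup : StepPlus k φ _ := stepPlus_adjoin hσ hb
  have hdown : StepPlus k (φ ∘ Equiv.swap (flipV σ a) (flipV σ b)) _ :=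
    stepPlus_adjoin (ν := σ) (l := a) (by simp [Equiv.swap_apply_of_ne_of_ne hσa hσb, hσ])
      (by simp [hb])
  rw [hjoin] at hdown
  exact .head (Or.inl hup) (.single (Or.inr hdown))

/-- With `ρ = ν - a + b` for `a ∈ ν \ μ`, `b ∈ μ \ ν`, the transposition `(ν μ)` is the conjugate
of the adjacent one `(ν ρ)` by `(ρ μ)`, and `ρ` is one step closer to `μ`. -/
theorem equivPM_comp_swap {c : ℕ} {φ : Finset (Fin (k + 1)) → Bool}
    (hφ : ∀ x : Finset (Fin (k + 1)), x.card + 1 = c → φ x = false)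
    {ν μ : Finset (Fin (k + 1))} (hν : ν.card = c) (hμ : μ.card = c) :
    EquivPM k φ (φ ∘ Equiv.swap ν μ) := by
  obtain ⟨n, hn⟩ : ∃ n, #(ν \ μ) = n := ⟨_, rfl⟩
  induction n generalizing φ ν with
  | zero =>
    have : ν = μ := eq_of_subset_of_card_le (sdiff_eq_empty_iff_subset.mp (card_eq_zero.mp hn))
      (by omega)
    subst this
    simpa using .refl
  | succ n ih =>
    obtain ⟨a, ha⟩ : (ν \ μ).Nonempty := card_pos.mp (by omega)
    obtain ⟨b, hb⟩ : (μ \ ν).Nonempty :=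
      card_pos.mp (by rw [← card_sdiff_comm (hν.trans hμ.symm)]; omega)
    rw [mem_sdiff] at ha hb
    set σ := ν.erase a
    have hbσ : b ∉ σ := fun h => hb.2 (mem_of_mem_erase h)
    have hνσ : flipV σ a = ν := by simp [σ, flipV, insert_erase ha.1]
    have hρσ : flipV σ b = insert b σ := by simp [flipV, hbσ]
    set ρ := insert b σ
    have hσ : σ.card + 1 = c := by rw [card_erase_add_one ha.1, hν]
    have hρ : ρ.card = c := by rw [card_insert_of_notMem hbσ, hσ]
    have hρn : #(ρ \ μ) = n := by
      rw [insert_sdiff_of_mem _ hb.1, erase_sdiff_comm, card_erase_of_mem (mem_sdiff.2 ha), hn,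
        Nat.add_sub_cancel]
    have hνρ : ν ≠ ρ := by
      have hab : a ≠ b := fun h => hb.2 (h ▸ ha.1)
      exact fun h => (by simp [ρ, σ, hab] : a ∉ ρ) (h ▸ ha.1)
    have hνμ : ν ≠ μ := fun h => ha.2 (h ▸ ha.1)
    have hφs := comp_swap_apply_eq_false hφ hρ hμ
    have e1 : EquivPM k φ (φ ∘ Equiv.swap ρ μ) := ih hφ hρ hρn
    have e2 : EquivPM k (φ ∘ Equiv.swap ρ μ) ((φ ∘ Equiv.swap ρ μ) ∘ Equiv.swap ν ρ) := by
      simpa only [hνσ, hρσ] using equivPM_comp_swap_flipV (hφs σ hσ) a b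
    have e3 := ih (comp_swap_apply_eq_false hφs hν hρ) hρ hρn
    have hconj : Equiv.swap ρ μ * Equiv.swap ν ρ * Equiv.swap ρ μ = Equiv.swap ν μ := by
      rw [Equiv.swap_mul_swap_mul_swap hνρ hνμ, Equiv.swap_comm]
    rw [← hconj]
    exact e1.trans (e2.trans e3)

lemma card_satSet_comp_perm (φ : Finset (Fin (k + 1)) → Bool)
    (e : Equiv.Perm (Finset (Fin (k + 1)))) : #(satSet (φ ∘ e)) = #(satSet φ) := by
  have : satSet (φ ∘ e) = (satSet φ).map e.symm.toEmbedding := by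
    ext x
    simp [satSet, Finset.mem_map_equiv]
  rw [this, card_map]

lemma exists_apply_eq_true_and_eq_false {φ φ' : Finset (Fin (k + 1)) → Bool}
    (hcard : #(satSet φ) = #(satSet φ')) (hne : φ ≠ φ') :
    ∃ ν, φ ν = true ∧ φ' ν = false := by
  by_contra! h
  have hsub : satSet φ ⊆ satSet φ' := by
    intro x
    simpa [satSet] using h x
  have hsat : satSet φ = satSet φ' := eq_of_subset_of_card_le hsub hcard.ge
  exact hne (funext fun x => Bool.eq_iff_iff.mpr (by simpa [satSet] using congrArg (x ∈ ·) hsat))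

/-- Exchanging a valuation satisfying only `φ` with one satisfying only `φ'` removes two
disagreements. -/
theorem equivPM_of_eq_off_card {c : ℕ} {φ φ' : Finset (Fin (k + 1)) → Bool}
    (hφ : ∀ x : Finset (Fin (k + 1)), x.card + 1 = c → φ x = false)
    (hoff : ∀ x : Finset (Fin (k + 1)), x.card ≠ c → φ x = φ' x)
    (hcard : #(satSet φ) = #(satSet φ')) : EquivPM k φ φ' := by
  obtain ⟨n, hn⟩ : ∃ n, #(univ.filter fun x => φ x ≠ φ' x) = n := ⟨_, rfl⟩
  induction n using Nat.strong_induction_on generalizing φ with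
  | _ n ih =>
  by_cases heq : φ = φ'
  · exact heq ▸ .refl
  obtain ⟨ν, hν, hν'⟩ := exists_apply_eq_true_and_eq_false hcard heq
  obtain ⟨μ, hμ', hμ⟩ := exists_apply_eq_true_and_eq_false hcard.symm (Ne.symm heq)
  have hνc : ν.card = c := by_contra fun h => by simpa [hν, hν'] using hoff ν h
  have hμc : μ.card = c := by_contra fun h => by simpa [hμ, hμ'] using hoff μ h
  have hoff₁ : ∀ x : Finset (Fin (k + 1)), x.card ≠ c → (φ ∘ Equiv.swap ν μ) x = φ' x := by
    intro x hx
    rw [Function.comp_apply, Equiv.swap_apply_of_ne_of_ne (ne_of_apply_ne card (hνc ▸ hx))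
      (ne_of_apply_ne card (hμc ▸ hx)), hoff x hx]
  have hfewer : (univ.filter fun x => (φ ∘ Equiv.swap ν μ) x ≠ φ' x) ⊂
      univ.filter fun x => φ x ≠ φ' x := by
    refine ssubset_iff_of_subset (fun x hx => ?_) |>.mpr ⟨ν, by simp [hν, hν'], by simp [hμ, hν']⟩
    rcases eq_or_ne x ν with rfl | hxν
    · simp [hν, hν']
    rcases eq_or_ne x μ with rfl | hxμ
    · simp [hμ, hμ']
    simpa [Equiv.swap_apply_of_ne_of_ne hxν hxμ] using hx
  exact (equivPM_comp_swap hφ hνc hμc).trans <| ih _ (hn ▸ card_lt_card hfewer)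
    (comp_swap_apply_eq_false hφ hνc hμc) hoff₁ ((card_satSet_comp_perm φ _).trans hcard) rfl

namespace CanonicalForm

variable {φ φ' : Finset (Fin (k + 1)) → Bool}

lemma apply_eq_true_of_card_lt (h : CanonicalForm k φ) {x y : Finset (Fin (k + 1))}
    (hx : φ x = true) (hy : Even y.card) (hlt : y.card < x.card) : φ y = true := by
  by_contra hφy
  exact h.2 ⟨x, y, h.1 x hx, hy, hlt, hx, by simpa using hφy⟩

lemma even_card_of_apply_ne (h : CanonicalForm k φ) (h' : CanonicalForm k φ')
    {x : Finset (Fin (k + 1))} (hx : φ x ≠ φ' x) : Even x.card := by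
  cases hφx : φ x
  · exact h'.1 x (by simpa [hφx] using hx.symm)
  · exact h.1 x hφx

/-- If `φ` and `φ'` disagree at `x` below a valuation `y` satisfying `φ`, then `φ` is true at
every even level below `y`, so `φ' x` is false, hence `φ'` is false at every level above `x`, and
`sat φ' ⊊ sat φ`. -/
lemma card_le_of_apply_ne (h : CanonicalForm k φ) (h' : CanonicalForm k φ')
    (hcard : #(satSet φ) = #(satSet φ')) {x y : Finset (Fin (k + 1))}
    (hy : φ y = true) (hx : φ x ≠ φ' x) : y.card ≤ x.card := by
  by_contra! hlt
  have hxeven := even_card_of_apply_ne h h' hx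
  have hφx : φ x = true := h.apply_eq_true_of_card_lt hy hxeven hlt
  have hφ'x : φ' x = false := by simpa [hφx] using hx.symm
  have hsub : satSet φ' ⊆ satSet φ := by
    intro z hz
    have hz : φ' z = true := (mem_filter.mp hz).2
    have hzx : z.card ≤ x.card := by
      by_contra! hzx
      simpa [hφ'x] using h'.apply_eq_true_of_card_lt hz hxeven hzx
    exact mem_filter.mpr ⟨mem_univ z, h.apply_eq_true_of_card_lt hy (h'.1 z hz) (by omega)⟩
  have hssub : satSet φ' ⊂ satSet φ :=
    ssubset_iff_of_subset hsub |>.mpr ⟨x, by simp [satSet, hφx], by simp [satSet, hφ'x]⟩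
  exact (card_lt_card hssub).ne hcard.symm

lemma card_eq_of_apply_ne (h : CanonicalForm k φ) (h' : CanonicalForm k φ')
    (hcard : #(satSet φ) = #(satSet φ')) {x y : Finset (Fin (k + 1))}
    (hx : φ x ≠ φ' x) (hy : φ y ≠ φ' y) : x.card = y.card := by
  have key : ∀ {x y}, φ x ≠ φ' x → φ y ≠ φ' y → y.card ≤ x.card := by
    intro x y hx hy
    cases hφy : φ y
    · exact card_le_of_apply_ne h' h hcard.symm (by simpa [hφy] using hy.symm) (Ne.symm hx)
    · exact card_le_of_apply_ne h h' hcard hφy hx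
  exact le_antisymm (key hy hx) (key hx hy)

end CanonicalForm

end

theorem stmt14_general (k : ℕ) (φ φ' : Finset (Fin (k + 1)) → Bool)
    (h : CanonicalForm k φ) (h' : CanonicalForm k φ')
    (hcard : (satSet φ).card = (satSet φ').card) :
    EquivPM k φ φ' := by
  by_cases heq : φ = φ'
  · exact heq ▸ .refl
  obtain ⟨x₀, hx₀⟩ := Function.ne_iff.mp heq
  have hoff : ∀ x : Finset (Fin (k + 1)), x.card ≠ x₀.card → φ x = φ' x := fun x hx =>
    by_contra fun hne => hx (h.card_eq_of_apply_ne h' hcard hne hx₀)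
  have hodd : ∀ x : Finset (Fin (k + 1)), x.card + 1 = x₀.card → φ x = false := by
    intro x hx
    have hx₀even := h.even_card_of_apply_ne h' hx₀
    by_contra hφx
    have hxeven := h.1 x (by simpa using hφx)
    rw [← hx] at hx₀even
    exact Nat.not_even_iff_odd.mpr hxeven.add_one hx₀even
  exact equivPM_of_eq_off_card hodd hoff hcard

/-- two Boolean functions in canonical form with the same number of
satisfying valuations are `≃`-equivalent. -/
theorem stmt14 (k : ℕ) (hk : 1 ≤ k) (φ φ' : Finset (Fin (k + 1)) → Bool)
    (h : CanonicalForm k φ) (h' : CanonicalForm k φ')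
    (hcard : (satSet φ).card = (satSet φ').card) :
    EquivPM k φ φ' :=
  stmt14_general k φ φ' h h' hcard
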